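/- arXiv:1310.1732 — 2 statements merged into one kernel-verified Lean document; each statement's English description precedes it below -/
import Mathlib

section
/- (Gap analysis, Case 4: R12 ≥ R21, R13 ≤ R31, R23 ≤ R32.) Suppose the nonnegative rate tuple lies in C̲'_g and additionally R12 ≥ R21, R13 ≤ R31, R23 ≤ R32. Define α32^b = (2^{2R23+1}−1)/(2h3²P), α31^b = 2^{2R23+1}(2^{2R13+1}−1)/(2h3²P), α32^u = 2^{2R13+2R23+2}(2^{2(R32−R23)}−1)/(h3²P), α31^u = 2^{2R32+2R13+2}(2^{2(R31−R13)}−1)/(h3²P), α21^b = 2^{2R32+2R31+2}(2^{2R21+1}−1)/(2h2²P), α12^u = 2^{2R21+2R32+2R31+3}(2^{2(R12−R21)}−1)/(h1²P), and α23^b = (h3²/h2²)α32^b, α13^b = (h3²/h1²)α31^b, α12^b = (h2²/h1²)α21^b. Then α31^b+α32^b+α32^u+α31^u ≤ 1, α21^b+α23^b ≤ 1, α12^b+α13^b+α12^u ≤ 1, and (2^{2(R13+R23)}−1)/(h3²P) + 2^{2(R13+R23)}(2^{2(R12+R32−R23)}−1)/(h2²P) + 2^{2(R13+R32+R12)}(2^{2(R31−R13)}−1)/(h1²P)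 ≤ 1. -/
noncomputable def Cg (x : ℝ) : ℝ := (1 / 2) * Real.logb 2 (1 + x)

/-! Write `X_ij = 2^(2 R_ij)`. Each rate constraint becomes a product bound
`2^(2c) · ∏ X_ij ≤ 1 + SNR`, and each power sum telescopes to a signed combination of such
products over a single SNR (for the relay power, one such quotient per SNR). The leading product
is bounded by its constraint, the remaining ones by `X_ij ≥ 1` or positivity, and what is left
is a small multiple of the SNR. The constraints on the cross channel enter through
`(|h2| + |h3|)² ≤ 4 h2²`. -/

open Real

lemma Cg_le_Cg {x y : ℝ} (hx : 0 < 1 + x) (hxy : x ≤ y) : Cg x ≤ Cg y := by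
  unfold Cg
  gcongr
  exact one_lt_two

lemma two_rpow_mul_le_of_le_Cg {x r c : ℝ} (hx : 0 < 1 + x) (h : r ≤ Cg x - c) :
    (2 : ℝ) ^ (2 * r) * 2 ^ (2 * c) ≤ 1 + x := by
  rw [← rpow_add two_pos, ← le_logb_iff_rpow_le one_lt_two hx]
  unfold Cg at h
  linarith

lemma sq_abs_add_abs_le {a b : ℝ} (h : b ^ 2 ≤ a ^ 2) : (|a| + |b|) ^ 2 ≤ 4 * a ^ 2 := by
  nlinarith [sq_abs a, sq_abs b, abs_nonneg b, sq_le_sq.mp h]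

section PowerAllocation

variable {g1 g2 g3 P R12 R13 R21 R23 R31 R32 : ℝ}

lemma powerAlloc_user3_le_one (hg3 : 0 < g3) (hP : 0 < P)
    (hG1 : R31 + R32 ≤ Cg (g3 * P) - 2) :
    (2 : ℝ) ^ (2 * R23 + 1) * ((2 : ℝ) ^ (2 * R13 + 1) - 1) / (2 * g3 * P)
      + ((2 : ℝ) ^ (2 * R23 + 1) - 1) / (2 * g3 * P)
      + (2 : ℝ) ^ (2 * R13 + 2 * R23 + 2) * ((2 : ℝ) ^ (2 * (R32 - R23)) - 1) / (g3 * P)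
      + (2 : ℝ) ^ (2 * R32 + 2 * R13 + 2) * ((2 : ℝ) ^ (2 * (R31 - R13)) - 1) / (g3 * P)
      ≤ 1 := by
  have hs3 : 0 < g3 * P := by positivity
  have H1 := two_rpow_mul_le_of_le_Cg (by positivity) hG1
  have hX13 : 0 < (2 : ℝ) ^ (2 * R13) := by positivity
  have hX23 : 0 < (2 : ℝ) ^ (2 * R23) := by positivity
  simp only [mul_add, mul_sub, rpow_add two_pos, rpow_sub two_pos] at H1 ⊢
  norm_num at H1 ⊢
  generalize (2 : ℝ) ^ (2 * R13) = X13, (2 : ℝ) ^ (2 * R23) = X23,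
    (2 : ℝ) ^ (2 * R31) = X31, (2 : ℝ) ^ (2 * R32) = X32 at *
  calc _ = (4 * (X31 * X32) - 2 * (X13 * X23) - 1 / 2) / (g3 * P) := by
        field_simp
        ring
    _ ≤ 1 := by
        rw [div_le_one hs3]
        linarith [mul_pos hX13 hX23]

lemma powerAlloc_user2_le_one (hg2 : 0 < g2) (hg3 : 0 < g3) (hP : 0 < P)
    (hr21 : 0 ≤ R21) (hr31 : 0 ≤ R31)
    (hG7 : R21 + R31 + R23 ≤ Cg (4 * g2 * P) - 7 / 2)
    (hG8 : R21 + R31 + R32 ≤ Cg (4 * g2 * P) - 7 / 2) :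
    (2 : ℝ) ^ (2 * R32 + 2 * R31 + 2) * ((2 : ℝ) ^ (2 * R21 + 1) - 1) / (2 * g2 * P)
      + g3 / g2 * (((2 : ℝ) ^ (2 * R23 + 1) - 1) / (2 * g3 * P)) ≤ 1 := by
  have hs2 : 0 < g2 * P := by positivity
  have H7 := two_rpow_mul_le_of_le_Cg (by positivity) hG7
  have H8 := two_rpow_mul_le_of_le_Cg (by positivity) hG8
  have hX21 : 1 ≤ (2 : ℝ) ^ (2 * R21) := one_le_rpow one_le_two (by positivity)
  have hX31 : 1 ≤ (2 : ℝ) ^ (2 * R31) := one_le_rpow one_le_two (by positivity)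
  have hX23 : 0 < (2 : ℝ) ^ (2 * R23) := by positivity
  have hX32 : 0 < (2 : ℝ) ^ (2 * R32) := by positivity
  simp only [mul_add, rpow_add two_pos] at H7 H8 ⊢
  norm_num at H7 H8 ⊢
  generalize (2 : ℝ) ^ (2 * R21) = X21, (2 : ℝ) ^ (2 * R23) = X23,
    (2 : ℝ) ^ (2 * R31) = X31, (2 : ℝ) ^ (2 * R32) = X32 at *
  calc _ = (4 * (X21 * X31 * X32) - 2 * (X31 * X32) + X23 - 1 / 2) / (g2 * P) := by
        field_simp
        ring
    _ ≤ 1 := by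
        rw [div_le_one hs2]
        linarith [mul_pos (zero_lt_one.trans_le hX31) hX32,
          mul_le_mul_of_nonneg_right (one_le_mul_of_one_le_of_one_le hX21 hX31) hX23.le]

lemma powerAlloc_user1_le_one (hg3 : 0 < g3) (hP : 0 < P) (hg12 : g2 ≤ g1) (hg23 : g3 ≤ g2)
    (hr31 : 0 ≤ R31) (hr32 : 0 ≤ R32)
    (hG2 : R13 + R23 ≤ Cg (g3 * P) - 2)
    (hG5 : R12 + R31 + R32 ≤ Cg (g1 * P + g2 * P) - 3) :
    g2 / g1 * ((2 : ℝ) ^ (2 * R32 + 2 * R31 + 2) * ((2 : ℝ) ^ (2 * R21 + 1) - 1) / (2 * g2 * P))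
      + g3 / g1 * ((2 : ℝ) ^ (2 * R23 + 1) * ((2 : ℝ) ^ (2 * R13 + 1) - 1) / (2 * g3 * P))
      + (2 : ℝ) ^ (2 * R21 + 2 * R32 + 2 * R31 + 3) * ((2 : ℝ) ^ (2 * (R12 - R21)) - 1)
          / (g1 * P) ≤ 1 := by
  have hg2 : 0 < g2 := hg3.trans_le hg23
  have hg1 : 0 < g1 := hg2.trans_le hg12
  have hs1 : 0 < g1 * P := by positivity
  have hs12 : g2 * P ≤ g1 * P := by gcongr
  have hs23 : g3 * P ≤ g2 * P := by gcongr
  have H2 := two_rpow_mul_le_of_le_Cg (by positivity) hG2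
  have H5 := two_rpow_mul_le_of_le_Cg (by positivity) hG5
  have hX31 : 1 ≤ (2 : ℝ) ^ (2 * R31) := one_le_rpow one_le_two (by positivity)
  have hX32 : 1 ≤ (2 : ℝ) ^ (2 * R32) := one_le_rpow one_le_two (by positivity)
  have hX21 : 0 < (2 : ℝ) ^ (2 * R21) := by positivity
  have hX23 : 0 < (2 : ℝ) ^ (2 * R23) := by positivity
  simp only [mul_add, mul_sub, rpow_add two_pos, rpow_sub two_pos] at H2 H5 ⊢
  norm_num at H2 H5 ⊢
  generalize (2 : ℝ) ^ (2 * R12) = X12, (2 : ℝ) ^ (2 * R13) = X13,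
    (2 : ℝ) ^ (2 * R21) = X21, (2 : ℝ) ^ (2 * R23) = X23,
    (2 : ℝ) ^ (2 * R31) = X31, (2 : ℝ) ^ (2 * R32) = X32 at *
  calc _ = (8 * (X12 * X31 * X32) - 4 * (X21 * X31 * X32) - 2 * (X31 * X32)
        + 2 * (X13 * X23) - X23) / (g1 * P) := by
        field_simp
        ring
    _ ≤ 1 := by
        have hX3132 : 1 ≤ X31 * X32 := one_le_mul_of_one_le_of_one_le hX31 hX32
        rw [div_le_one hs1]
        linarith [mul_pos hX21 (zero_lt_one.trans_le hX3132)]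

lemma relayPower_le_one (hg3 : 0 < g3) (hP : 0 < P) (hg12 : g2 ≤ g1) (hg23 : g3 ≤ g2)
    (hr12 : 0 ≤ R12) (hr13 : 0 ≤ R13) (hr23 : 0 ≤ R23) (hr32 : 0 ≤ R32)
    (hG2 : R13 + R23 ≤ Cg (g3 * P) - 2)
    (hG3 : R12 + R13 + R32 ≤ Cg (g2 * P + g3 * P) - 3)
    (hG5 : R12 + R31 + R32 ≤ Cg (g1 * P + g2 * P) - 3) :
    ((2 : ℝ) ^ (2 * (R13 + R23)) - 1) / (g3 * P)
      + (2 : ℝ) ^ (2 * (R13 + R23)) * ((2 : ℝ) ^ (2 * (R12 + R32 - R23)) - 1) / (g2 * P)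
      + (2 : ℝ) ^ (2 * (R13 + R32 + R12)) * ((2 : ℝ) ^ (2 * (R31 - R13)) - 1) / (g1 * P)
      ≤ 1 := by
  have hs3 : 0 < g3 * P := by positivity
  have hs2 : 0 < g2 * P := hs3.trans_le (by gcongr)
  have hs1 : 0 < g1 * P := hs2.trans_le (by gcongr)
  have hs12 : g2 * P ≤ g1 * P := by gcongr
  have hs23 : g3 * P ≤ g2 * P := by gcongr
  have H2 := two_rpow_mul_le_of_le_Cg (by positivity) hG2
  have H3 := two_rpow_mul_le_of_le_Cg (by positivity) hG3
  have H5 := two_rpow_mul_le_of_le_Cg (by positivity) hG5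
  have hX12 : 1 ≤ (2 : ℝ) ^ (2 * R12) := one_le_rpow one_le_two (by positivity)
  have hX13 : 1 ≤ (2 : ℝ) ^ (2 * R13) := one_le_rpow one_le_two (by positivity)
  have hX23 : 1 ≤ (2 : ℝ) ^ (2 * R23) := one_le_rpow one_le_two (by positivity)
  have hX32 : 1 ≤ (2 : ℝ) ^ (2 * R32) := one_le_rpow one_le_two (by positivity)
  simp only [mul_add, mul_sub, rpow_add two_pos, rpow_sub two_pos] at H2 H3 H5 ⊢
  norm_num at H2 H3 H5 ⊢
  generalize (2 : ℝ) ^ (2 * R12) = X12, (2 : ℝ) ^ (2 * R13) = X13,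
    (2 : ℝ) ^ (2 * R23) = X23, (2 : ℝ) ^ (2 * R31) = X31, (2 : ℝ) ^ (2 * R32) = X32 at *
  have hterm3 : (X13 * X23 - 1) / (g3 * P) ≤ 1 / 16 := by
    rw [div_le_iff₀ hs3]; linarith
  have hterm2 : (X12 * X13 * X32 - X13 * X23) / (g2 * P) ≤ 1 / 32 := by
    rw [div_le_iff₀ hs2]; linarith [one_le_mul_of_one_le_of_one_le hX13 hX23]
  have hterm1 : (X12 * X31 * X32 - X12 * X13 * X32) / (g1 * P) ≤ 1 / 32 := by
    rw [div_le_iff₀ hs1]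
    linarith [one_le_mul_of_one_le_of_one_le (one_le_mul_of_one_le_of_one_le hX12 hX13) hX32]
  calc _ = (X13 * X23 - 1) / (g3 * P) + (X12 * X13 * X32 - X13 * X23) / (g2 * P)
        + (X12 * X31 * X32 - X12 * X13 * X32) / (g1 * P) := by
        field_simp
    _ ≤ 1 := by linarith

end PowerAllocation

theorem stmt_14_general
    (P h1 h2 h3 : ℝ) (hP : 0 < P)
    (hh12 : h2 ^ 2 ≤ h1 ^ 2) (hh23 : h3 ^ 2 ≤ h2 ^ 2) (hh3 : 0 < h3 ^ 2)
    (R12 R13 R21 R23 R31 R32 : ℝ)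
    (hr12 : 0 ≤ R12) (hr13 : 0 ≤ R13) (hr21 : 0 ≤ R21)
    (hr23 : 0 ≤ R23) (hr31 : 0 ≤ R31) (hr32 : 0 ≤ R32)
    (hG1 : R31 + R32 ≤ Cg (h3 ^ 2 * P) - 2)
    (hG2 : R13 + R23 ≤ Cg (h3 ^ 2 * P) - 2)
    (hG3 : R12 + R13 + R32 ≤ Cg (h2 ^ 2 * P + h3 ^ 2 * P) - 3)
    (hG5 : R12 + R31 + R32 ≤ Cg (h1 ^ 2 * P + h2 ^ 2 * P) - 3)
    (hG7 : R21 + R31 + R23 ≤ Cg ((|h2| + |h3|) ^ 2 * P) - 7 / 2)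
    (hG8 : R21 + R31 + R32 ≤ Cg ((|h2| + |h3|) ^ 2 * P) - 7 / 2)
    (a32b a31b a32u a31u a21b a12u a23b a13b a12b : ℝ)
    (ha32b : a32b = ((2:ℝ) ^ (2 * R23 + 1) - 1) / (2 * h3 ^ 2 * P))
    (ha31b : a31b = (2:ℝ) ^ (2 * R23 + 1) * ((2:ℝ) ^ (2 * R13 + 1) - 1) / (2 * h3 ^ 2 * P))
    (ha32u : a32u = (2:ℝ) ^ (2 * R13 + 2 * R23 + 2) * ((2:ℝ) ^ (2 * (R32 - R23)) - 1) / (h3 ^ 2 * P))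
    (ha31u : a31u = (2:ℝ) ^ (2 * R32 + 2 * R13 + 2) * ((2:ℝ) ^ (2 * (R31 - R13)) - 1) / (h3 ^ 2 * P))
    (ha21b : a21b = (2:ℝ) ^ (2 * R32 + 2 * R31 + 2) * ((2:ℝ) ^ (2 * R21 + 1) - 1) / (2 * h2 ^ 2 * P))
    (ha12u : a12u = (2:ℝ) ^ (2 * R21 + 2 * R32 + 2 * R31 + 3) * ((2:ℝ) ^ (2 * (R12 - R21)) - 1) / (h1 ^ 2 * P))
    (ha23b : a23b = h3 ^ 2 / h2 ^ 2 * a32b)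
    (ha13b : a13b = h3 ^ 2 / h1 ^ 2 * a31b)
    (ha12b : a12b = h2 ^ 2 / h1 ^ 2 * a21b) :
    a31b + a32b + a32u + a31u ≤ 1 ∧
    a21b + a23b ≤ 1 ∧
    a12b + a13b + a12u ≤ 1 ∧
    ((2:ℝ) ^ (2 * (R13 + R23)) - 1) / (h3 ^ 2 * P)
      + (2:ℝ) ^ (2 * (R13 + R23)) * ((2:ℝ) ^ (2 * (R12 + R32 - R23)) - 1) / (h2 ^ 2 * P)
      + (2:ℝ) ^ (2 * (R13 + R32 + R12)) * ((2:ℝ) ^ (2 * (R31 - R13)) - 1) / (h1 ^ 2 * P) ≤ 1 := by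
  subst ha32b ha31b ha32u ha31u ha21b ha12u ha23b ha13b ha12b
  have hh2 : 0 < h2 ^ 2 := hh3.trans_le hh23
  have hCg_cross : Cg ((|h2| + |h3|) ^ 2 * P) ≤ Cg (4 * h2 ^ 2 * P) :=
    Cg_le_Cg (by positivity) (by gcongr; exact sq_abs_add_abs_le hh23)
  exact ⟨powerAlloc_user3_le_one hh3 hP hG1,
    powerAlloc_user2_le_one hh2 hh3 hP hr21 hr31 (by linarith) (by linarith),
    powerAlloc_user1_le_one hh3 hP hh12 hh23 hr31 hr32 hG2 hG5,
    relayPower_le_one hh3 hP hh12 hh23 hr12 hr13 hr23 hr32 hG2 hG3 hG5⟩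

theorem stmt_14
    (P h1 h2 h3 : ℝ) (hP : 0 < P)
    (hh12 : h2 ^ 2 ≤ h1 ^ 2) (hh23 : h3 ^ 2 ≤ h2 ^ 2) (hh3 : 0 < h3 ^ 2)
    (R12 R13 R21 R23 R31 R32 : ℝ)
    (hr12 : 0 ≤ R12) (hr13 : 0 ≤ R13) (hr21 : 0 ≤ R21)
    (hr23 : 0 ≤ R23) (hr31 : 0 ≤ R31) (hr32 : 0 ≤ R32)
    (hG1 : R31 + R32 ≤ Cg (h3 ^ 2 * P) - 2)
    (hG2 : R13 + R23 ≤ Cg (h3 ^ 2 * P) - 2)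
    (hG3 : R12 + R13 + R32 ≤ Cg (h2 ^ 2 * P + h3 ^ 2 * P) - 3)
    (hG4 : R13 + R23 + R12 ≤ Cg (h2 ^ 2 * P + h3 ^ 2 * P) - 3)
    (hG5 : R12 + R31 + R32 ≤ Cg (h1 ^ 2 * P + h2 ^ 2 * P) - 3)
    (hG6 : R13 + R23 + R21 ≤ Cg (h1 ^ 2 * P + h3 ^ 2 * P) - 3)
    (hG7 : R21 + R31 + R23 ≤ Cg ((|h2| + |h3|) ^ 2 * P) - 7 / 2)
    (hG8 : R21 + R31 + R32 ≤ Cg ((|h2| + |h3|) ^ 2 * P) - 7 / 2)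
    (hc1 : R21 ≤ R12) (hc2 : R13 ≤ R31) (hc3 : R23 ≤ R32)
    (a32b a31b a32u a31u a21b a12u a23b a13b a12b : ℝ)
    (ha32b : a32b = ((2:ℝ) ^ (2 * R23 + 1) - 1) / (2 * h3 ^ 2 * P))
    (ha31b : a31b = (2:ℝ) ^ (2 * R23 + 1) * ((2:ℝ) ^ (2 * R13 + 1) - 1) / (2 * h3 ^ 2 * P))
    (ha32u : a32u = (2:ℝ) ^ (2 * R13 + 2 * R23 + 2) * ((2:ℝ) ^ (2 * (R32 - R23)) - 1) / (h3 ^ 2 * P))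
    (ha31u : a31u = (2:ℝ) ^ (2 * R32 + 2 * R13 + 2) * ((2:ℝ) ^ (2 * (R31 - R13)) - 1) / (h3 ^ 2 * P))
    (ha21b : a21b = (2:ℝ) ^ (2 * R32 + 2 * R31 + 2) * ((2:ℝ) ^ (2 * R21 + 1) - 1) / (2 * h2 ^ 2 * P))
    (ha12u : a12u = (2:ℝ) ^ (2 * R21 + 2 * R32 + 2 * R31 + 3) * ((2:ℝ) ^ (2 * (R12 - R21)) - 1) / (h1 ^ 2 * P))
    (ha23b : a23b = h3 ^ 2 / h2 ^ 2 * a32b)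
    (ha13b : a13b = h3 ^ 2 / h1 ^ 2 * a31b)
    (ha12b : a12b = h2 ^ 2 / h1 ^ 2 * a21b) :
    a31b + a32b + a32u + a31u ≤ 1 ∧
    a21b + a23b ≤ 1 ∧
    a12b + a13b + a12u ≤ 1 ∧
    ((2:ℝ) ^ (2 * (R13 + R23)) - 1) / (h3 ^ 2 * P)
      + (2:ℝ) ^ (2 * (R13 + R23)) * ((2:ℝ) ^ (2 * (R12 + R32 - R23)) - 1) / (h2 ^ 2 * P)
      + (2:ℝ) ^ (2 * (R13 + R32 + R12)) * ((2:ℝ) ^ (2 * (R31 - R13)) - 1) / (h1 ^ 2 * P) ≤ 1 :=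
  stmt_14_general P h1 h2 h3 hP hh12 hh23 hh3 R12 R13 R21 R23 R31 R32 hr12 hr13 hr21 hr23 hr31 hr32
    hG1 hG2 hG3 hG5 hG7 hG8 a32b a31b a32u a31u a21b a12u a23b a13b a12b ha32b ha31b ha32u ha31u
    ha21b ha12u ha23b ha13b ha12b
end

section
/- (Gap analysis, Case 7: R12 ≤ R21, R13 ≤ R31, R23 ≥ R32.) Suppose the nonnegative rate tuple lies in C̲'_g and additionally R12 ≤ R21, R13 ≤ R31, R23 ≥ R32. Define α32^b = (2^{2R32+1}−1)/(2h3²P), α31^b = 2^{2R32+1}(2^{2R13+1}−1)/(2h3²P), α31^u = 2^{2R13+2R32+2}(2^{2(R31−R13)}−1)/(h3²P), α21^b = 2^{2R32+2R31+2}(2^{2R12+1}−1)/(2h2²P), α23^u = 2^{2R12+2R31+2R32+3}(2^{2(R23−R32)}−1)/(h2²P), α21^u = 2^{2R12+2R31+2R23+3}(2^{2(R21−R12)}−1)/(h2²P), and α23^b = (h3²/h2²)α32^b, α13^b = (h3²/h1²)α31^b, α12^b = (h2²/h1²)α21^b. Then α31^b+α32^b+α31^u ≤ 1, α21^b+α23^b+α21^u+α23^u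 ≤ 1, α12^b+α13^b ≤ 1, and (2^{2(R13+R23)}−1)/(h3²P) + 2^{2(R13+R23)}(2^{2R12}−1)/(h2²P) + 2^{2(R13+R23+R12)}(2^{2(R21−R12+R31−R13)}−1)/(h1²P) ≤ 1. -/
/-!
Write `x_ij = 2 ^ (2 * R_ij)`. Every power allocation is a sum of superposition layers of the
form `2 ^ s * (2 ^ (2 * r) - 1) / (g * P)`, which telescopes: each budget becomes a single
fraction whose numerator is dominated by one monomial in the `x_ij`. Exponentiating the matching
constraint of `C̲'_g` bounds that monomial by `(1 + SNR) / 2 ^ (2 * k)`, and the gap `k` leaves room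
for the remaining terms. The sum-channel constraint enters through `(|h2| + |h3|) ^ 2 ≤ 4 * h2 ^ 2`.
-/

theorem two_rpow_le_one_add_of_le_Cg_sub {x y k : ℝ} (hx : 0 < 1 + x) (h : y ≤ Cg x - k) :
    (2:ℝ) ^ (2 * y + 2 * k) ≤ 1 + x := by
  calc (2:ℝ) ^ (2 * y + 2 * k) ≤ (2:ℝ) ^ Real.logb 2 (1 + x) := by
        gcongr
        · norm_num
        · unfold Cg at h; linarith
    _ = 1 + x := Real.rpow_logb two_pos (by norm_num) hx

theorem sq_abs_add_abs_le_four_mul_sq {x y : ℝ} (h : y ^ 2 ≤ x ^ 2) :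
    (|x| + |y|) ^ 2 ≤ 4 * x ^ 2 := by
  have hyx : |y| ≤ |x| := sq_le_sq.mp h
  nlinarith [abs_nonneg y, sq_abs x]

theorem one_le_two_rpow_two_mul {R : ℝ} (hR : 0 ≤ R) : 1 ≤ (2:ℝ) ^ (2 * R) :=
  Real.one_le_rpow one_le_two (by positivity)

theorem uplink_power_user3_le_one {g P R13 R31 R32 : ℝ} (hg : 0 < g) (hP : 0 < P)
    (hR : R31 + R32 ≤ Cg (g * P) - 2) :
    (2:ℝ) ^ (2 * R32 + 1) * ((2:ℝ) ^ (2 * R13 + 1) - 1) / (2 * g * P)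
      + ((2:ℝ) ^ (2 * R32 + 1) - 1) / (2 * g * P)
      + (2:ℝ) ^ (2 * R13 + 2 * R32 + 2) * ((2:ℝ) ^ (2 * (R31 - R13)) - 1) / (g * P) ≤ 1 := by
  have hF := two_rpow_le_one_add_of_le_Cg_sub (by positivity) hR
  norm_num only [mul_add, mul_sub, mul_one, Real.rpow_add two_pos, Real.rpow_sub two_pos,
    Real.rpow_one, Real.rpow_ofNat] at hF ⊢
  set b := (2:ℝ) ^ (2 * R13)
  set e := (2:ℝ) ^ (2 * R31)
  set f := (2:ℝ) ^ (2 * R32)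
  have hb : 0 < b := by positivity
  have hf : 0 < f := by positivity
  calc _ = (8 * e * f - 4 * b * f - 1) / (2 * g * P) := by field_simp; ring
    _ ≤ 1 := by
      rw [div_le_one (by positivity)]
      linarith [mul_pos hb hf, mul_pos hg hP]

theorem uplink_power_user2_le_one {g2 g3 s P R12 R21 R23 R31 R32 : ℝ} (hg3 : 0 < g3)
    (hg23 : g3 ≤ g2) (hs : s ≤ 4 * g2) (hs0 : 0 ≤ s) (hP : 0 < P) (hR31 : 0 ≤ R31)
    (hR : R21 + R31 + R23 ≤ Cg (s * P) - 7 / 2) :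
    (2:ℝ) ^ (2 * R32 + 2 * R31 + 2) * ((2:ℝ) ^ (2 * R12 + 1) - 1) / (2 * g2 * P)
      + g3 / g2 * (((2:ℝ) ^ (2 * R32 + 1) - 1) / (2 * g3 * P))
      + (2:ℝ) ^ (2 * R12 + 2 * R31 + 2 * R23 + 3) * ((2:ℝ) ^ (2 * (R21 - R12)) - 1) / (g2 * P)
      + (2:ℝ) ^ (2 * R12 + 2 * R31 + 2 * R32 + 3) * ((2:ℝ) ^ (2 * (R23 - R32)) - 1) / (g2 * P)
      ≤ 1 := by
  have hg2 : 0 < g2 := hg3.trans_le hg23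
  have hF := two_rpow_le_one_add_of_le_Cg_sub (by positivity) hR
  have he := one_le_two_rpow_two_mul hR31
  norm_num only [mul_add, mul_sub, mul_one, Real.rpow_add two_pos, Real.rpow_sub two_pos,
    Real.rpow_one, Real.rpow_ofNat] at hF ⊢
  set a := (2:ℝ) ^ (2 * R12)
  set c := (2:ℝ) ^ (2 * R21)
  set d := (2:ℝ) ^ (2 * R23)
  set e := (2:ℝ) ^ (2 * R31)
  set f := (2:ℝ) ^ (2 * R32)
  have ha : 0 < a := by positivity
  have hf : 0 < f := by positivity
  calc _ = (16 * c * d * e - 8 * a * e * f - 4 * e * f + 2 * f - 1) / (2 * g2 * P) := by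
        field_simp; ring
    _ ≤ 1 := by
      rw [div_le_one (by positivity)]
      linarith [mul_pos (mul_pos ha hf) (zero_lt_one.trans_le he),
        mul_le_mul_of_nonneg_right he hf.le, mul_le_mul_of_nonneg_right hs hP.le, mul_pos hg2 hP]

theorem uplink_power_user1_le_one {g1 g2 g3 P R12 R13 R31 R32 : ℝ} (hg3 : 0 < g3)
    (hg2 : 0 < g2) (hg21 : g2 ≤ g1) (hP : 0 < P)
    (hR12 : 0 ≤ R12) (hR31 : 0 ≤ R31) (hR32 : 0 ≤ R32) (hR13_le : R13 ≤ R31)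
    (hR : R12 + R31 + R32 ≤ Cg (g1 * P + g2 * P) - 3) :
    g2 / g1 * ((2:ℝ) ^ (2 * R32 + 2 * R31 + 2) * ((2:ℝ) ^ (2 * R12 + 1) - 1) / (2 * g2 * P))
      + g3 / g1 * ((2:ℝ) ^ (2 * R32 + 1) * ((2:ℝ) ^ (2 * R13 + 1) - 1) / (2 * g3 * P)) ≤ 1 := by
  have hg1 : 0 < g1 := hg2.trans_le hg21
  have hF := two_rpow_le_one_add_of_le_Cg_sub (by positivity) hR
  have ha := one_le_two_rpow_two_mul hR12
  have he := one_le_two_rpow_two_mul hR31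
  have hf := one_le_two_rpow_two_mul hR32
  have hbe : (2:ℝ) ^ (2 * R13) ≤ (2:ℝ) ^ (2 * R31) := by gcongr; norm_num
  norm_num only [mul_add, mul_sub, mul_one, Real.rpow_add two_pos, Real.rpow_sub two_pos,
    Real.rpow_one, Real.rpow_ofNat] at hF ⊢
  set a := (2:ℝ) ^ (2 * R12)
  set b := (2:ℝ) ^ (2 * R13)
  set e := (2:ℝ) ^ (2 * R31)
  set f := (2:ℝ) ^ (2 * R32)
  have hae : 1 ≤ a * e := one_le_mul_of_one_le_of_one_le ha he
  have haef : 1 ≤ a * e * f := one_le_mul_of_one_le_of_one_le hae hf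
  calc _ = (8 * a * e * f - 4 * e * f + 4 * b * f - 2 * f) / (2 * g1 * P) := by
        field_simp; ring
    _ ≤ 1 := by
      rw [div_le_one (by positivity)]
      linarith [mul_le_mul_of_nonneg_right hbe (zero_le_one.trans hf),
        mul_le_mul_of_nonneg_right hg21 hP.le]

theorem downlink_relay_power_le_one {g1 g2 g3 s P R12 R13 R21 R23 R31 : ℝ} (hg3 : 0 < g3)
    (hg23 : g3 ≤ g2) (hg21 : g2 ≤ g1) (hs : s ≤ 4 * g2) (hs0 : 0 ≤ s) (hP : 0 < P)
    (hR12 : 0 ≤ R12) (hR13 : 0 ≤ R13) (hR23 : 0 ≤ R23)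
    (hC3 : R13 + R23 ≤ Cg (g3 * P) - 2)
    (hC23 : R13 + R23 + R12 ≤ Cg (g2 * P + g3 * P) - 3)
    (hCs : R21 + R31 + R23 ≤ Cg (s * P) - 7 / 2) :
    ((2:ℝ) ^ (2 * (R13 + R23)) - 1) / (g3 * P)
      + (2:ℝ) ^ (2 * (R13 + R23)) * ((2:ℝ) ^ (2 * R12) - 1) / (g2 * P)
      + (2:ℝ) ^ (2 * (R13 + R23 + R12)) * ((2:ℝ) ^ (2 * (R21 - R12 + R31 - R13)) - 1) / (g1 * P)
      ≤ 1 := by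
  have hg2 : 0 < g2 := hg3.trans_le hg23
  have hg1 : 0 < g1 := hg2.trans_le hg21
  have hF3 := two_rpow_le_one_add_of_le_Cg_sub (by positivity) hC3
  have hF23 := two_rpow_le_one_add_of_le_Cg_sub (by positivity) hC23
  have hFs := two_rpow_le_one_add_of_le_Cg_sub (by positivity) hCs
  have ha := one_le_two_rpow_two_mul hR12
  have hb := one_le_two_rpow_two_mul hR13
  have hd := one_le_two_rpow_two_mul hR23
  norm_num only [mul_add, mul_sub, mul_one, Real.rpow_add two_pos, Real.rpow_sub two_pos,
    Real.rpow_one, Real.rpow_ofNat] at hF3 hF23 hFs ⊢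
  set a := (2:ℝ) ^ (2 * R12)
  set b := (2:ℝ) ^ (2 * R13)
  set c := (2:ℝ) ^ (2 * R21)
  set d := (2:ℝ) ^ (2 * R23)
  set e := (2:ℝ) ^ (2 * R31)
  have hbd : 1 ≤ b * d := one_le_mul_of_one_le_of_one_le hb hd
  have habd : 1 ≤ a * (b * d) := one_le_mul_of_one_le_of_one_le ha hbd
  have h3 : (b * d - 1) / (g3 * P) ≤ 1 / 16 := by
    rw [div_le_iff₀ (by positivity)]; linarith
  have h2 : (b * d * a - b * d) / (g2 * P) ≤ 1 / 16 := by
    rw [div_le_iff₀ (by positivity)]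
    linarith [mul_le_mul_of_nonneg_right hg23 hP.le]
  have h1 : (c * d * e - b * d * a) / (g1 * P) ≤ 1 / 16 := by
    rw [div_le_iff₀ (by positivity)]
    linarith [mul_le_mul_of_nonneg_right hs hP.le, mul_le_mul_of_nonneg_right hg21 hP.le,
      mul_pos hg1 hP]
  have hcancel : b * d * a * (c / a * e / b) = c * d * e := by field_simp
  rw [hcancel]
  linarith

theorem stmt_17_general
    (P h1 h2 h3 : ℝ) (hP : 0 < P)
    (hh12 : h2 ^ 2 ≤ h1 ^ 2) (hh23 : h3 ^ 2 ≤ h2 ^ 2) (hh3 : 0 < h3 ^ 2)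
    (R12 R13 R21 R23 R31 R32 : ℝ)
    (hr12 : 0 ≤ R12) (hr13 : 0 ≤ R13)
    (hr23 : 0 ≤ R23) (hr31 : 0 ≤ R31) (hr32 : 0 ≤ R32)
    (hG1 : R31 + R32 ≤ Cg (h3 ^ 2 * P) - 2)
    (hG2 : R13 + R23 ≤ Cg (h3 ^ 2 * P) - 2)
    (hG4 : R13 + R23 + R12 ≤ Cg (h2 ^ 2 * P + h3 ^ 2 * P) - 3)
    (hG5 : R12 + R31 + R32 ≤ Cg (h1 ^ 2 * P + h2 ^ 2 * P) - 3)
    (hG7 : R21 + R31 + R23 ≤ Cg ((|h2| + |h3|) ^ 2 * P) - 7 / 2)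
    (hc2 : R13 ≤ R31)
    (a32b a31b a31u a21b a23u a21u a23b a13b a12b : ℝ)
    (ha32b : a32b = ((2:ℝ) ^ (2 * R32 + 1) - 1) / (2 * h3 ^ 2 * P))
    (ha31b : a31b = (2:ℝ) ^ (2 * R32 + 1) * ((2:ℝ) ^ (2 * R13 + 1) - 1) / (2 * h3 ^ 2 * P))
    (ha31u : a31u = (2:ℝ) ^ (2 * R13 + 2 * R32 + 2) * ((2:ℝ) ^ (2 * (R31 - R13)) - 1) / (h3 ^ 2 * P))
    (ha21b : a21b = (2:ℝ) ^ (2 * R32 + 2 * R31 + 2) * ((2:ℝ) ^ (2 * R12 + 1) - 1) / (2 * h2 ^ 2 * P))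
    (ha23u : a23u = (2:ℝ) ^ (2 * R12 + 2 * R31 + 2 * R32 + 3) * ((2:ℝ) ^ (2 * (R23 - R32)) - 1) / (h2 ^ 2 * P))
    (ha21u : a21u = (2:ℝ) ^ (2 * R12 + 2 * R31 + 2 * R23 + 3) * ((2:ℝ) ^ (2 * (R21 - R12)) - 1) / (h2 ^ 2 * P))
    (ha23b : a23b = h3 ^ 2 / h2 ^ 2 * a32b)
    (ha13b : a13b = h3 ^ 2 / h1 ^ 2 * a31b)
    (ha12b : a12b = h2 ^ 2 / h1 ^ 2 * a21b) :
    a31b + a32b + a31u ≤ 1 ∧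
    a21b + a23b + a21u + a23u ≤ 1 ∧
    a12b + a13b ≤ 1 ∧
    ((2:ℝ) ^ (2 * (R13 + R23)) - 1) / (h3 ^ 2 * P)
      + (2:ℝ) ^ (2 * (R13 + R23)) * ((2:ℝ) ^ (2 * R12) - 1) / (h2 ^ 2 * P)
      + (2:ℝ) ^ (2 * (R13 + R23 + R12)) * ((2:ℝ) ^ (2 * (R21 - R12 + R31 - R13)) - 1) / (h1 ^ 2 * P) ≤ 1 := by
  have hh2 : 0 < h2 ^ 2 := hh3.trans_le hh23
  have hs : (|h2| + |h3|) ^ 2 ≤ 4 * h2 ^ 2 := sq_abs_add_abs_le_four_mul_sq hh23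
  have hs0 : 0 ≤ (|h2| + |h3|) ^ 2 := sq_nonneg _
  subst ha32b ha31b ha31u ha21b ha23u ha21u ha23b ha13b ha12b
  exact ⟨uplink_power_user3_le_one hh3 hP hG1,
    uplink_power_user2_le_one hh3 hh23 hs hs0 hP hr31 hG7,
    uplink_power_user1_le_one hh3 hh2 hh12 hP hr12 hr31 hr32 hc2 hG5,
    downlink_relay_power_le_one hh3 hh23 hh12 hs hs0 hP hr12 hr13 hr23 hG2 hG4 hG7⟩

theorem stmt_17
    (P h1 h2 h3 : ℝ) (hP : 0 < P)
    (hh12 : h2 ^ 2 ≤ h1 ^ 2) (hh23 : h3 ^ 2 ≤ h2 ^ 2) (hh3 : 0 < h3 ^ 2)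
    (R12 R13 R21 R23 R31 R32 : ℝ)
    (hr12 : 0 ≤ R12) (hr13 : 0 ≤ R13) (hr21 : 0 ≤ R21)
    (hr23 : 0 ≤ R23) (hr31 : 0 ≤ R31) (hr32 : 0 ≤ R32)
    (hG1 : R31 + R32 ≤ Cg (h3 ^ 2 * P) - 2)
    (hG2 : R13 + R23 ≤ Cg (h3 ^ 2 * P) - 2)
    (hG3 : R12 + R13 + R32 ≤ Cg (h2 ^ 2 * P + h3 ^ 2 * P) - 3)
    (hG4 : R13 + R23 + R12 ≤ Cg (h2 ^ 2 * P + h3 ^ 2 * P) - 3)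
    (hG5 : R12 + R31 + R32 ≤ Cg (h1 ^ 2 * P + h2 ^ 2 * P) - 3)
    (hG6 : R13 + R23 + R21 ≤ Cg (h1 ^ 2 * P + h3 ^ 2 * P) - 3)
    (hG7 : R21 + R31 + R23 ≤ Cg ((|h2| + |h3|) ^ 2 * P) - 7 / 2)
    (hG8 : R21 + R31 + R32 ≤ Cg ((|h2| + |h3|) ^ 2 * P) - 7 / 2)
    (hc1 : R12 ≤ R21) (hc2 : R13 ≤ R31) (hc3 : R32 ≤ R23)
    (a32b a31b a31u a21b a23u a21u a23b a13b a12b : ℝ)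
    (ha32b : a32b = ((2:ℝ) ^ (2 * R32 + 1) - 1) / (2 * h3 ^ 2 * P))
    (ha31b : a31b = (2:ℝ) ^ (2 * R32 + 1) * ((2:ℝ) ^ (2 * R13 + 1) - 1) / (2 * h3 ^ 2 * P))
    (ha31u : a31u = (2:ℝ) ^ (2 * R13 + 2 * R32 + 2) * ((2:ℝ) ^ (2 * (R31 - R13)) - 1) / (h3 ^ 2 * P))
    (ha21b : a21b = (2:ℝ) ^ (2 * R32 + 2 * R31 + 2) * ((2:ℝ) ^ (2 * R12 + 1) - 1) / (2 * h2 ^ 2 * P))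
    (ha23u : a23u = (2:ℝ) ^ (2 * R12 + 2 * R31 + 2 * R32 + 3) * ((2:ℝ) ^ (2 * (R23 - R32)) - 1) / (h2 ^ 2 * P))
    (ha21u : a21u = (2:ℝ) ^ (2 * R12 + 2 * R31 + 2 * R23 + 3) * ((2:ℝ) ^ (2 * (R21 - R12)) - 1) / (h2 ^ 2 * P))
    (ha23b : a23b = h3 ^ 2 / h2 ^ 2 * a32b)
    (ha13b : a13b = h3 ^ 2 / h1 ^ 2 * a31b)
    (ha12b : a12b = h2 ^ 2 / h1 ^ 2 * a21b) :
    a31b + a32b + a31u ≤ 1 ∧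
    a21b + a23b + a21u + a23u ≤ 1 ∧
    a12b + a13b ≤ 1 ∧
    ((2:ℝ) ^ (2 * (R13 + R23)) - 1) / (h3 ^ 2 * P)
      + (2:ℝ) ^ (2 * (R13 + R23)) * ((2:ℝ) ^ (2 * R12) - 1) / (h2 ^ 2 * P)
      + (2:ℝ) ^ (2 * (R13 + R23 + R12)) * ((2:ℝ) ^ (2 * (R21 - R12 + R31 - R13)) - 1) / (h1 ^ 2 * P) ≤ 1 :=
  stmt_17_general P h1 h2 h3 hP hh12 hh23 hh3 R12 R13 R21 R23 R31 R32 hr12 hr13 hr23 hr31 hr32 hG1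
    hG2 hG4 hG5 hG7 hc2 a32b a31b a31u a21b a23u a21u a23b a13b a12b ha32b ha31b ha31u ha21b ha23u
    ha21u ha23b ha13b ha12b
end
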